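/- Let N ≥ 3 be odd, φ ∈ ℝ^N, and let θ be any stationary point of F_φ (with θ_N = 0). Then the energy per site e = F_φ(θ)/N and the rescaled Hessian determinant 𝒟 = |det 𝓗(θ)|^{1/(N−1)} satisfy |1 − e| ≤ 𝒟, i.e. |1 − F_φ(θ)/N| ≤ |det 𝓗(θ)|^{1/(N−1)}. -/

import Mathlib

open Real Filter

/-- The variable `s k = φ k + θ (k+1) - θ k` (indices cyclic mod `N`,
0-based; paper index `k` corresponds to `k-1` here, so `s_N` is `sVar` at `lastIdx`). -/
noncomputable def sVar (N : ℕ) (hN : 0 < N) (φ θ : Fin N → ℝ) (k : Fin N) : ℝ :=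
  φ k + θ ⟨((k : ℕ) + 1) % N, Nat.mod_lt _ hN⟩ - θ k

/-- The lattice Landau gauge functional / random phase XY Hamiltonian
`F_φ(θ) = Σ_k (1 - cos(φ_k + θ_{k+1} - θ_k))` with periodic boundary conditions. -/
noncomputable def Fxy (N : ℕ) (hN : 0 < N) (φ θ : Fin N → ℝ) : ℝ :=
  ∑ k : Fin N, (1 - Real.cos (sVar N hN φ θ k))

/-- The index of the fixed site (paper site `N`). -/
def lastIdx (N : ℕ) (hN : 0 < N) : Fin N :=
  ⟨N - 1, Nat.sub_lt hN Nat.one_pos⟩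

/-- `θ` is a stationary point of `F_φ` regarded as a function of the free
coordinates `θ_1, …, θ_{N-1}` (0-based: coordinates `k` with `k < N-1`),
with `θ` at `lastIdx` held fixed: all partial derivatives vanish. -/
noncomputable def IsStationaryPt (N : ℕ) (hN : 0 < N) (φ θ : Fin N → ℝ) : Prop :=
  ∀ k : Fin N, (k : ℕ) < N - 1 →
    deriv (fun t : ℝ => Fxy N hN φ (Function.update θ k t)) (θ k) = 0

/-- The `(N-1) × (N-1)` tridiagonal matrix with entries
`δ_{ij}(c_{i-1} + c_i) - δ_{i-1,j} c_{i-1} - δ_{i+1,j} c_i`, where indices are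
0-based (paper index `i` ↦ `i-1`) and `c_0 := c_N` (cyclic predecessor). -/
noncomputable def hessC (N : ℕ) (hN : 0 < N) (c : Fin N → ℝ) :
    Matrix (Fin (N - 1)) (Fin (N - 1)) ℝ :=
  Matrix.of fun i j =>
    (if i = j then
        c ⟨((i : ℕ) + (N - 1)) % N, Nat.mod_lt _ hN⟩ +
          c ⟨(i : ℕ), lt_of_lt_of_le i.isLt (Nat.sub_le N 1)⟩
      else 0)
    - (if (i : ℕ) = (j : ℕ) + 1 then c ⟨((i : ℕ) + (N - 1)) % N, Nat.mod_lt _ hN⟩ else 0)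
    - (if (j : ℕ) = (i : ℕ) + 1 then c ⟨(i : ℕ), lt_of_lt_of_le i.isLt (Nat.sub_le N 1)⟩ else 0)

/-- The Hessian of `F_φ` (with the last coordinate fixed) at a configuration `θ`. -/
noncomputable def hessAt (N : ℕ) (hN : 0 < N) (φ θ : Fin N → ℝ) :
    Matrix (Fin (N - 1)) (Fin (N - 1)) ℝ :=
  hessC N hN fun k => Real.cos (sVar N hN φ θ k)

/-- `F_φ` as a function of the free coordinates only: the coordinate at
`lastIdx` is overwritten by `0`. -/
noncomputable def FxyFixed (N : ℕ) (hN : 0 < N) (φ : Fin N → ℝ) (η : Fin N → ℝ) : ℝ :=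
  Fxy N hN φ (Function.update η (lastIdx N hN) 0)

/-- The value `σ = (Φ + 2πl - π Σ_{k=1}^{N-1} q_k) / (1 + Σ_{k=1}^{N-1} (-1)^{q_k})`. -/
noncomputable def sigmaVal (N : ℕ) (hN : 0 < N) (φ : Fin N → ℝ) (q : Fin N → ℕ) (l : ℤ) : ℝ :=
  ((∑ k, φ k) + 2 * Real.pi * (l : ℝ)
      - Real.pi * ∑ k ∈ Finset.univ.erase (lastIdx N hN), (q k : ℝ)) /
    (1 + ∑ k ∈ Finset.univ.erase (lastIdx N hN), (-1 : ℝ) ^ (q k))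

/-!
At a stationary point `∂F/∂θ_k = sin s_{k-1} - sin s_k`, so all `sin s_k` agree and all
`|cos s_k|` equal a common `r`. The Hessian is the Dirichlet Laplacian of a path with edge
weights `c_k = cos s_k`; its determinant is the spanning-tree polynomial
`∑_e ∏_{e' ≠ e} c_{e'}` of the weighted `N`-cycle, which for `|c_k| = r` has absolute value
`r^(N-2) |∑_k c_k|`. Since `N` is odd, `∑_k c_k` is an odd multiple of `r`, so
`r ≤ |∑_k c_k| ≤ N r`. As `1 - e = (∑_k c_k) / N`, this gives `|1 - e| ≤ r ≤ 𝒟`.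
-/

section CycleTreeSum

variable {R : Type*} [CommRing R] {n : ℕ}

def cycleTreeSum (w : Fin (n + 1) → R) : R :=
  ∑ e : Fin (n + 1), ∏ i, w (e.succAbove i)

lemma cycleTreeSum_succ (w : Fin (n + 2) → R) :
    cycleTreeSum w = ∏ i : Fin (n + 1), w i.succ + w 0 * cycleTreeSum (Fin.tail w) := by
  rw [cycleTreeSum, Fin.sum_univ_succ, cycleTreeSum, Finset.mul_sum]
  simp [Fin.prod_univ_succ, Fin.tail]

lemma mul_cycleTreeSum_of_sq_eq {w : Fin (n + 1) → R} {ρ : R} (hw : ∀ e, w e ^ 2 = ρ) :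
    ρ * cycleTreeSum w = (∏ e, w e) * ∑ e, w e := by
  rw [cycleTreeSum, Finset.mul_sum, Finset.mul_sum]
  refine Finset.sum_congr rfl fun e _ => ?_
  rw [← hw e, Fin.prod_univ_succAbove w e]
  ring

end CycleTreeSum

namespace Matrix

variable {R : Type*} [CommRing R]

def pathLaplacian (n : ℕ) (w : Fin (n + 1) → R) : Matrix (Fin n) (Fin n) R :=
  of fun i j =>
    (if i = j then w i.castSucc + w i.succ else 0)
    - (if (i : ℕ) = (j : ℕ) + 1 then w i.castSucc else 0)
    - (if (j : ℕ) = (i : ℕ) + 1 then w i.succ else 0)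

lemma pathLaplacian_submatrix_succ (n : ℕ) (w : Fin (n + 2) → R) :
    (pathLaplacian (n + 1) w).submatrix Fin.succ Fin.succ = pathLaplacian n (Fin.tail w) := by
  ext i j
  simp [pathLaplacian, Fin.tail]

lemma det_pathLaplacian_succ_succ (n : ℕ) (w : Fin (n + 3) → R) :
    (pathLaplacian (n + 2) w).det =
      (w 0 + w 1) * (pathLaplacian (n + 1) (Fin.tail w)).det
        - w 1 ^ 2 * (pathLaplacian n (Fin.tail (Fin.tail w))).det := by
  set A := pathLaplacian (n + 2) w
  set B := A.submatrix Fin.succ (Fin.succAbove 1)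
  have hB : B.det = -w 1 * (pathLaplacian n (Fin.tail (Fin.tail w))).det := by
    rw [det_succ_column_zero, Fin.sum_univ_succ, Finset.sum_eq_zero]
    · have : B.submatrix (Fin.succAbove 0) Fin.succ =
          (A.submatrix Fin.succ Fin.succ).submatrix Fin.succ Fin.succ := by
        ext i j; simp [B]
      rw [this, pathLaplacian_submatrix_succ, pathLaplacian_submatrix_succ]
      simp [B, A, pathLaplacian, Fin.ext_iff]
    · intro i _
      simp [B, A, pathLaplacian, Fin.ext_iff]
  rw [det_succ_row_zero, Fin.sum_univ_succ, Fin.sum_univ_succ, Finset.sum_eq_zero]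
  · rw [Fin.succ_zero_eq_one, hB, Fin.succAbove_zero, pathLaplacian_submatrix_succ]
    simp [A, pathLaplacian, Fin.ext_iff]
    ring
  · intro j _
    simp [A, pathLaplacian, Fin.ext_iff]

theorem det_pathLaplacian (n : ℕ) (w : Fin (n + 1) → R) :
    (pathLaplacian n w).det = cycleTreeSum w := by
  induction n using Nat.twoStepInduction with
  | zero => simp [cycleTreeSum]
  | one => simp [pathLaplacian, cycleTreeSum, Fin.sum_univ_two, add_comm]
  | more n ih₀ ih₁ =>
    rw [det_pathLaplacian_succ_succ, ih₀, ih₁, cycleTreeSum_succ w,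
      cycleTreeSum_succ (Fin.tail w), Fin.prod_univ_succ (fun i => w i.succ)]
    simp only [Fin.tail, Fin.succ_zero_eq_one]
    ring

end Matrix

lemma le_abs_sum_of_abs_eq {ι : Type*} [Fintype ι] (hodd : Odd (Fintype.card ι)) {c : ι → ℝ}
    {r : ℝ} (hc : ∀ j, |c j| = r) : r ≤ |∑ j, c j| := by
  obtain ⟨j₀⟩ := Fintype.card_pos_iff.mp hodd.pos
  have hr : 0 ≤ r := hc j₀ ▸ abs_nonneg _
  have hsign (j : ι) : ∃ z : ℤ, Odd z ∧ c j = z * r := by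
    rcases (abs_eq hr).mp (hc j) with h | h
    · exact ⟨1, odd_one, by simp [h]⟩
    · exact ⟨-1, odd_neg_one, by simp [h]⟩
  choose z hz_odd hz using hsign
  have hZ : Odd (∑ j, z j) := by
    have heven : Even (∑ j, (z j - 1)) :=
      Finset.even_sum _ fun j _ => (hz_odd j).sub_odd odd_one
    have : ∑ j, z j = ∑ j, (z j - 1) + Fintype.card ι := by simp [Finset.sum_sub_distrib]
    rw [this]
    exact heven.add_odd (by exact_mod_cast hodd)
  have hZ₁ : (1 : ℝ) ≤ |∑ j, (z j : ℝ)| := by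
    exact_mod_cast Int.one_le_abs fun h => by simp [h] at hZ
  rw [Finset.sum_congr rfl fun j _ => hz j, ← Finset.sum_mul, abs_mul, abs_of_nonneg hr]
  exact le_mul_of_one_le_left hr hZ₁

lemma abs_sum_div_le_abs_cycleTreeSum_rpow {n : ℕ} (hn : n ≠ 0) (hodd : Odd (n + 1))
    {w : Fin (n + 1) → ℝ} {r : ℝ} (hw : ∀ e, |w e| = r) :
    |∑ e, w e| / (n + 1) ≤ |cycleTreeSum w| ^ (1 / (n : ℝ)) := by
  have hr : 0 ≤ r := hw 0 ▸ abs_nonneg _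
  have hmean : |∑ e, w e| / (n + 1) ≤ r := by
    rw [div_le_iff₀ (by positivity)]
    calc |∑ e, w e| ≤ ∑ e, |w e| := Finset.abs_sum_le_sum_abs _ _
      _ = r * (n + 1) := by simp [hw, mul_comm]
  have hpow : r ^ n ≤ |cycleTreeSum w| := by
    rcases hr.eq_or_lt with rfl | hr₀
    · simp [zero_pow hn]
    have hprod : r ^ 2 * |cycleTreeSum w| = r ^ (n + 1) * |∑ e, w e| := by
      have := congrArg abs (mul_cycleTreeSum_of_sq_eq (w := w) (ρ := r ^ 2) fun e => by
        rw [← hw e, sq_abs])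
      simpa [abs_mul, Finset.abs_prod, hw] using this
    have hsum := le_abs_sum_of_abs_eq (by simpa using hodd) hw
    refine le_of_mul_le_mul_left ?_ (by positivity : 0 < r ^ 2)
    calc r ^ 2 * r ^ n = r ^ (n + 1) * r := by ring
      _ ≤ r ^ (n + 1) * |∑ e, w e| := by gcongr
      _ = _ := hprod.symm
  calc |∑ e, w e| / (n + 1) ≤ r := hmean
    _ = (r ^ n) ^ (1 / (n : ℝ)) := by rw [one_div, Real.pow_rpow_inv_natCast hr hn]
    _ ≤ |cycleTreeSum w| ^ (1 / (n : ℝ)) := by gcongr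

lemma Fin.apply_eq_apply_last_of_apply_sub_one {α : Type*} {n : ℕ} {f : Fin (n + 1) → α}
    (hf : ∀ k, k ≠ Fin.last n → f (k - 1) = f k) (j : Fin (n + 1)) : f j = f (Fin.last n) := by
  induction j using Fin.induction with
  | zero =>
    rcases eq_or_ne (0 : Fin (n + 1)) (Fin.last n) with h | h
    · rw [h]
    · rw [← hf 0 h, sub_eq_iff_eq_add.mpr (Fin.last_add_one n).symm]
  | succ i ih =>
    rcases eq_or_ne i.succ (Fin.last n) with h | h
    · rw [h]
    · rw [← hf _ h, sub_eq_iff_eq_add.mpr (Fin.coeSucc_eq_succ (a := i)).symm, ih]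

lemma Real.abs_cos_eq_abs_cos_of_sin_eq {x y : ℝ} (h : sin x = sin y) : |cos x| = |cos y| := by
  rw [← sq_eq_sq_iff_abs_eq_abs, cos_sq', cos_sq', h]

section StationaryPoints

variable {n : ℕ} (hN : 0 < n + 1) (φ θ : Fin (n + 1) → ℝ)

lemma sVar_eq_add_one (k : Fin (n + 1)) : sVar (n + 1) hN φ θ k = φ k + θ (k + 1) - θ k := by
  rw [sVar]
  congr 3
  ext
  simp [Fin.val_add]

lemma hasDerivAt_Fxy_update (k : Fin (n + 1)) :
    HasDerivAt (fun t => Fxy (n + 1) hN φ (Function.update θ k t))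
      (sin (sVar (n + 1) hN φ θ (k - 1)) - sin (sVar (n + 1) hN φ θ k)) (θ k) := by
  have hupd (x : Fin (n + 1)) : HasDerivAt (fun t => Function.update θ k t x)
      ((Pi.single k 1 : Fin (n + 1) → ℝ) x) (θ k) :=
    (hasDerivAt_pi.mp (hasDerivAt_update θ k (θ k)) x :)
  have hterm (j : Fin (n + 1)) :
      HasDerivAt (fun t => 1 - cos (sVar (n + 1) hN φ (Function.update θ k t) j))
        (sin (sVar (n + 1) hN φ θ j) *
          ((Pi.single k 1 : Fin (n + 1) → ℝ) (j + 1) - (Pi.single k 1 : Fin (n + 1) → ℝ) j))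
        (θ k) := by
    have := (((hupd (j + 1)).const_add (φ j)).sub (hupd j)).cos.const_sub 1
    simpa [sVar_eq_add_one] using this
  refine (HasDerivAt.fun_sum (u := Finset.univ) fun j _ => hterm j).congr_deriv ?_
  simp only [Pi.single_apply, mul_sub, mul_ite, mul_one, mul_zero, Finset.sum_sub_distrib,
    ← eq_sub_iff_add_eq, Finset.sum_ite_eq', Finset.mem_univ, if_true]

variable {hN φ θ}

lemma IsStationaryPt.sin_sVar_eq (h : IsStationaryPt (n + 1) hN φ θ) (j : Fin (n + 1)) :
    sin (sVar (n + 1) hN φ θ j) = sin (sVar (n + 1) hN φ θ (Fin.last n)) := by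
  refine Fin.apply_eq_apply_last_of_apply_sub_one
    (f := fun j => sin (sVar (n + 1) hN φ θ j)) (fun k hk => ?_) j
  have hk' : (k : ℕ) < n + 1 - 1 := by simpa using Fin.val_lt_last hk
  have := h k hk'
  rw [(hasDerivAt_Fxy_update hN φ θ k).deriv] at this
  exact sub_eq_zero.mp this

end StationaryPoints

lemma one_sub_Fxy_div (N : ℕ) (hN : 0 < N) (φ θ : Fin N → ℝ) :
    1 - Fxy N hN φ θ / N = (∑ k, cos (sVar N hN φ θ k)) / N := by
  have : (N : ℝ) ≠ 0 := by positivity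
  field_simp
  simp [Fxy, Finset.sum_sub_distrib]

lemma hessC_eq_pathLaplacian (n : ℕ) (hN : 0 < n + 1) (c : Fin (n + 1) → ℝ) :
    hessC (n + 1) hN c = Matrix.pathLaplacian n fun e => c (e - 1) := by
  refine Matrix.ext fun (i j : Fin n) => ?_
  have h₁ : (⟨((i : ℕ) + (n + 1 - 1)) % (n + 1), Nat.mod_lt _ hN⟩ : Fin (n + 1)) =
      i.castSucc - 1 := by
    have hone : 1 % (n + 1) = 1 := Nat.mod_eq_of_lt (by have := i.isLt; omega)
    ext
    simp only [Fin.val_sub, Fin.val_one', Fin.val_castSucc, hone]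
    congr 1
    omega
  have h₂ : (⟨(i : ℕ), lt_of_lt_of_le i.isLt (Nat.sub_le (n + 1) 1)⟩ : Fin (n + 1)) =
      i.succ - 1 :=
    (sub_eq_iff_eq_add.mpr Fin.coeSucc_eq_succ.symm).symm
  simp only [hessC, Matrix.pathLaplacian, Matrix.of_apply, h₁, h₂]

/-- at any stationary point of `F_φ` (odd `N`), the energy per
site `e = F_φ(θ)/N` and the rescaled Hessian determinant
`𝒟 = |det 𝓗(θ)|^{1/(N-1)}` satisfy `|1 - e| ≤ 𝒟`. -/
theorem stmt15 (N : ℕ) (hN : 3 ≤ N) (hodd : Odd N) (φ θ : Fin N → ℝ)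
    (hstat : IsStationaryPt N (by omega) φ θ) :
    |1 - Fxy N (by omega) φ θ / N| ≤
      |(hessAt N (by omega) φ θ).det| ^ ((1 : ℝ) / ((N : ℝ) - 1)) := by
  obtain ⟨n, rfl⟩ : ∃ n, N = n + 1 := ⟨N - 1, by omega⟩
  set c : Fin (n + 1) → ℝ := fun k => cos (sVar (n + 1) (by omega) φ θ k)
  have hc (k : Fin (n + 1)) : |c (k - 1)| = |c (Fin.last n)| :=
    abs_cos_eq_abs_cos_of_sin_eq (hstat.sin_sVar_eq _)
  have hsum : ∑ k, c (k - 1) = ∑ k, c k := Equiv.sum_comp (Equiv.subRight 1) c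
  rw [one_sub_Fxy_div, hessAt, hessC_eq_pathLaplacian, Matrix.det_pathLaplacian, abs_div,
    Nat.abs_cast, ← hsum]
  convert abs_sum_div_le_abs_cycleTreeSum_rpow (by omega) hodd hc using 3
  all_goals (push_cast; ring)
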